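/- arXiv:2308.09996 — 3 statements merged into one kernel-verified Lean document; each statement's English description precedes it below -/
import Mathlib

section
/- Let G be a finite simple graph and C ⊆ V(G) a set of vertices that is not a vertex cover of G, such that there exists an edge {x_i, x_j} of G for which both C ∪ {x_i} and C ∪ {x_j} are vertex covers of G. Then the colon ideal satisfies J(G) : X_C = ⟨x_i, x_j⟩, where X_C = ∏_{x ∈ C} x. -/
open MvPolynomial CategoryTheory

noncomputable section

/-- A set of vertices is a vertex cover if it meets every edge. -/
def IsVertexCover {V : Type} (G : SimpleGraph V) (C : Set V) : Prop :=
  ∀ ⦃u v : V⦄, G.Adj u v → u ∈ C ∨ v ∈ C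

/-- A vertex cover minimal with respect to inclusion. -/
def IsMinimalVertexCover {V : Type} (G : SimpleGraph V) (C : Set V) : Prop :=
  IsVertexCover G C ∧ ∀ C' ⊆ C, IsVertexCover G C' → C' = C

/-- `α₀(G)`: the minimum cardinality of a vertex cover of `G`. -/
def coverNumber {V : Type} (G : SimpleGraph V) : ℕ :=
  sInf {k | ∃ C : Set V, IsVertexCover G C ∧ C.ncard = k}

/-- `bight(I(G))`: the maximum cardinality of a minimal vertex cover of `G`. -/
def bigHeight {V : Type} (G : SimpleGraph V) : ℕ :=
  sSup {k | ∃ C : Set V, IsMinimalVertexCover G C ∧ C.ncard = k}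

/-- The edge ideal `I(G) ⊆ K[x_v : v ∈ V]`, generated by the monomials
`x_u * x_v` over the edges `{u,v}` of `G`. -/
def edgeIdeal (K : Type) [Field K] {V : Type} (G : SimpleGraph V) :
    Ideal (MvPolynomial V K) :=
  Ideal.span {m | ∃ u v : V, G.Adj u v ∧ m = X u * X v}

/-- The cover ideal `J(G) = ⋂_{{u,v} ∈ E(G)} ⟨x_u, x_v⟩`. -/
def coverIdeal (K : Type) [Field K] {V : Type} (G : SimpleGraph V) :
    Ideal (MvPolynomial V K) :=
  ⨅ (u : V) (v : V) (_ : G.Adj u v), Ideal.span {X u, X v}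

/-- The v-number of a graded ideal `I`: the least `d ≥ 0` such that there is a
homogeneous polynomial `f` of degree `d` with `I : f` a prime ideal. -/
def vNumber {K : Type} [Field K] {V : Type} (I : Ideal (MvPolynomial V K)) : ℕ :=
  sInf {d | ∃ f : MvPolynomial V K, f.IsHomogeneous d ∧
    (I.colon (Ideal.span {f})).IsPrime}

/-- The homogeneous maximal ideal `⟨x_1, …, x_n⟩` of the polynomial ring. -/
def maxIdeal (K : Type) [Field K] (V : Type) : Ideal (MvPolynomial V K) :=
  Ideal.span (Set.range (X : V → MvPolynomial V K))

/-- The depth of the module `M` with respect to the ideal `J`: the supremum of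
the lengths of regular sequences on `M` consisting of elements of `J`. -/
def mdepth {R : Type} [CommRing R] (J : Ideal R) (M : Type) [AddCommGroup M]
    [Module R M] : ℕ :=
  sSup {k | ∃ rs : List R, rs.length = k ∧ (∀ r ∈ rs, r ∈ J) ∧
    RingTheory.Sequence.IsRegular M rs}

/-- The projective dimension of an `R`-module `M`, characterized by the
vanishing of `Ext^i(M, N)` for all `i > d` and all modules `N`. -/
def projDim (R : Type) [CommRing R] (M : ModuleCat.{0} R) : ℕ :=
  sInf {d : ℕ | ∀ (N : ModuleCat.{0} R) (i : ℕ), d < i →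
    Subsingleton (((Ext R (ModuleCat.{0} R) i).obj (Opposite.op M)).obj N)}

/-! Since `C ∪ {i}` and `C ∪ {j}` are vertex covers, `x_i X_C` and `x_j X_C` lie in `J(G)`.
Conversely `J(G) ⊆ ⟨x_i, x_j⟩`, and `i, j ∉ C` because `C` itself is not a cover. A polynomial
lies in the monomial ideal `⟨x_i, x_j⟩` iff each of its monomials involves `x_i` or `x_j`, so
multiplying by `X_C` does not change membership, and `f X_C ∈ J(G)` forces `f ∈ ⟨x_i, x_j⟩`. -/

namespace MvPolynomial

variable {σ R : Type*} [CommSemiring R]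

theorem mul_X_mem_span_X_image_iff {s : Set σ} {v : σ} (hv : v ∉ s) {f : MvPolynomial σ R} :
    f * X v ∈ Ideal.span (X '' s) ↔ f ∈ Ideal.span (X '' s) := by
  have shift : ∀ m : σ →₀ ℕ, ∀ i ∈ s, (m + Finsupp.single v 1 : σ →₀ ℕ) i = m i := fun m i hi ↦ by
    simp [Finsupp.single_eq_of_ne (ne_of_mem_of_not_mem hi hv)]
  simp only [mem_ideal_span_X_image, support_mul_X, Finset.mem_map, addRightEmbedding_apply,
    forall_exists_index, and_imp, forall_apply_eq_imp_iff₂]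
  exact forall₂_congr fun m _ ↦ exists_congr fun i ↦ and_congr_right fun hi ↦ by rw [shift m i hi]

theorem mul_prod_X_mem_span_X_image_iff {s : Set σ} {C : Finset σ} (hC : ∀ v ∈ C, v ∉ s)
    {f : MvPolynomial σ R} :
    f * ∏ v ∈ C, X v ∈ Ideal.span (X '' s) ↔ f ∈ Ideal.span (X '' s) := by
  classical
  induction C using Finset.induction_on generalizing f with
  | empty => simp
  | insert a C ha ih =>
    rw [Finset.prod_insert ha, ← mul_assoc, ih fun v hv ↦ hC v (by simp [hv]),
      mul_X_mem_span_X_image_iff (hC a (by simp))]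

theorem colon_span_prod_X_eq_span_X_image {s : Set σ} {C : Finset σ} (hC : ∀ v ∈ C, v ∉ s) :
    (Ideal.span (X '' s)).colon
        ((Ideal.span {∏ v ∈ C, X v} : Ideal (MvPolynomial σ R)) : Set (MvPolynomial σ R)) =
      Ideal.span (X '' s) := by
  ext f
  rw [Ideal.mem_colon_span_singleton, mul_prod_X_mem_span_X_image_iff hC]

end MvPolynomial

section CoverIdeal

variable {K : Type} [Field K] {V : Type} {G : SimpleGraph V}

theorem mem_coverIdeal_iff {f : MvPolynomial V K} :
    f ∈ coverIdeal K G ↔ ∀ ⦃u v : V⦄, G.Adj u v → f ∈ Ideal.span {X u, X v} := by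
  simp only [coverIdeal, Ideal.mem_iInf]

theorem coverIdeal_le_span_pair {u v : V} (huv : G.Adj u v) :
    coverIdeal K G ≤ Ideal.span {X u, X v} :=
  fun _ hf ↦ mem_coverIdeal_iff.mp hf huv

theorem prod_X_mem_coverIdeal {S : Finset V} (hS : IsVertexCover G S) :
    ∏ x ∈ S, X x ∈ coverIdeal K G := by
  refine mem_coverIdeal_iff.mpr fun u v huv ↦ ?_
  rcases hS huv with hu | hv
  · exact Ideal.mem_of_dvd _ (Finset.dvd_prod_of_mem X hu)
      (Ideal.subset_span (Set.mem_insert _ _))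
  · exact Ideal.mem_of_dvd _ (Finset.dvd_prod_of_mem X hv)
      (Ideal.subset_span (Set.mem_insert_of_mem _ rfl))

theorem X_mem_coverIdeal_colon {C : Finset V} {w : V} (hw : w ∉ C)
    (hCw : IsVertexCover G ((↑C : Set V) ∪ {w})) :
    X w ∈ (coverIdeal K G).colon (Ideal.span {∏ x ∈ C, X x} : Ideal (MvPolynomial V K)) := by
  classical
  rw [Ideal.mem_colon_span_singleton, ← Finset.prod_insert hw]
  apply prod_X_mem_coverIdeal
  rwa [Finset.coe_insert, Set.insert_eq, Set.union_comm]

end CoverIdeal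

theorem coverIdeal_colon_eq_span_pair_general
    {K : Type} [Field K] {n : ℕ} (G : SimpleGraph (Fin n))
    (C : Finset (Fin n))
    (hC : ¬ IsVertexCover G (↑C : Set (Fin n)))
    (i j : Fin n) (hij : G.Adj i j)
    (hCi : IsVertexCover G ((↑C : Set (Fin n)) ∪ {i}))
    (hCj : IsVertexCover G ((↑C : Set (Fin n)) ∪ {j})) :
    (coverIdeal K G).colon (Ideal.span {∏ x ∈ C, X x} : Ideal (MvPolynomial (Fin n) K)) =
      Ideal.span {X i, X j} := by
  have notMem : ∀ w, IsVertexCover G ((↑C : Set (Fin n)) ∪ {w}) → w ∉ C := fun w hw hwC ↦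
    hC (by rwa [Set.union_singleton, Set.insert_eq_of_mem (Finset.mem_coe.mpr hwC)] at hw)
  have hi := notMem i hCi
  have hj := notMem j hCj
  have hij_notin : ∀ v ∈ C, v ∉ ({i, j} : Set (Fin n)) := by
    rintro v hv (rfl | rfl) <;> contradiction
  apply le_antisymm
  · refine (Submodule.colon_mono (coverIdeal_le_span_pair hij) le_rfl).trans_eq ?_
    rw [← Set.image_pair (X (R := K)) i j,
      MvPolynomial.colon_span_prod_X_eq_span_X_image hij_notin]
  · rw [Ideal.span_le]
    rintro f (rfl | rfl)
    exacts [X_mem_coverIdeal_colon hi hCi, X_mem_coverIdeal_colon hj hCj]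

/-- If `C` is not a vertex cover of `G` but there is an edge `{x_i, x_j}` with
both `C ∪ {x_i}` and `C ∪ {x_j}` vertex covers, then `J(G) : X_C = ⟨x_i, x_j⟩`. -/
theorem coverIdeal_colon_eq_span_pair
    {K : Type} [Field K] {n : ℕ} (hn : 1 ≤ n) (G : SimpleGraph (Fin n))
    (hE : G.edgeSet.Nonempty) (C : Finset (Fin n))
    (hC : ¬ IsVertexCover G (↑C : Set (Fin n)))
    (i j : Fin n) (hij : G.Adj i j)
    (hCi : IsVertexCover G ((↑C : Set (Fin n)) ∪ {i}))
    (hCj : IsVertexCover G ((↑C : Set (Fin n)) ∪ {j})) :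
    (coverIdeal K G).colon (Ideal.span {∏ x ∈ C, X x} : Ideal (MvPolynomial (Fin n) K)) =
      Ideal.span {X i, X j} :=
  coverIdeal_colon_eq_span_pair_general G C hC i j hij hCi hCj

end
end

section
/- For every finite simple graph G with at least one edge, v(J(G)) = min{ |C| : C ⊆ V(G) is not a vertex cover of G, but there exists an edge {x_i, x_j} of G such that both C ∪ {x_i} and C ∪ {x_j} are vertex covers of G }. -/
open MvPolynomial CategoryTheory

noncomputable section

/-! For a prime `P = ⟨x_u, x_v⟩` we have `P : f = P` or `P : f = ⊤` according as `f ∉ P` or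
`f ∈ P`, so `J(G) : f` is the intersection of the primes `⟨x_u, x_v⟩` over the edges with
`f ∉ ⟨x_u, x_v⟩`. If this finite intersection is prime, it is one of them, `⟨x_i, x_j⟩`, and it
lies in all the others, so every edge avoiding `f` contains both `i` and `j`. A monomial of `f`
outside `⟨x_i, x_j⟩` then has a support `C` with `C ∪ {i}`, `C ∪ {j}` vertex covers but `C`
not, and `|C| ≤ deg f`. Conversely such a `C` gives `J(G) : ∏_{v ∈ C} x_v = ⟨x_i, x_j⟩`. -/

theorem Nat.sInf_eq_sInf_of_subset_of_forall_exists_le {S T : Set ℕ} (hST : S ⊆ T)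
    (hTS : ∀ d ∈ T, ∃ k ∈ S, k ≤ d) : sInf T = sInf S := by
  rcases T.eq_empty_or_nonempty with rfl | hT
  · rw [Set.subset_empty_iff.mp hST]
  obtain ⟨k, hk, hkd⟩ := hTS _ (Nat.sInf_mem hT)
  exact le_antisymm (Nat.sInf_le (hST (Nat.sInf_mem ⟨k, hk⟩))) ((Nat.sInf_le hk).trans hkd)

theorem Finsupp.card_support_le_degree {σ : Type*} (s : σ →₀ ℕ) : s.support.card ≤ s.degree := by
  rw [Finsupp.degree_apply]
  simpa using s.support.card_nsmul_le_sum s 1 fun i hi =>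
    Nat.one_le_iff_ne_zero.mpr (Finsupp.mem_support_iff.mp hi)

namespace MvPolynomial

variable {σ R : Type*}

theorem isPrime_span_X_image [CommRing R] [IsDomain R] (s : Set σ) :
    (Ideal.span (X '' s : Set (MvPolynomial σ R))).IsPrime := by
  classical
  set P := Ideal.span (X '' s : Set (MvPolynomial σ R))
  let φ : MvPolynomial σ R →ₐ[R] MvPolynomial σ R :=
    aeval fun v => if v ∈ s then 0 else (X v : MvPolynomial σ R)
  suffices RingHom.ker φ = P from this ▸ RingHom.ker_isPrime φ
  refine le_antisymm (fun g hg => ?_) (Ideal.span_le.mpr ?_)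
  · have hmk : (Ideal.Quotient.mkₐ R P).comp φ = Ideal.Quotient.mkₐ R P := by
      refine algHom_ext fun v => ?_
      by_cases hv : v ∈ s
      · have hXv : X v ∈ P := Ideal.subset_span (Set.mem_image_of_mem X hv)
        simpa [φ, hv] using (Ideal.Quotient.eq_zero_iff_mem.mpr hXv).symm
      · simp [φ, hv]
    rw [← Ideal.Quotient.eq_zero_iff_mem, ← Ideal.Quotient.mkₐ_eq_mk R, ← hmk,
      AlgHom.comp_apply, RingHom.mem_ker.mp hg, map_zero]
  · rintro _ ⟨v, hv, rfl⟩
    simp [φ, hv]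

theorem isPrime_span_X_pair [CommRing R] [IsDomain R] (u v : σ) :
    (Ideal.span {X u, X v} : Ideal (MvPolynomial σ R)).IsPrime := by
  simpa [Set.image_pair] using isPrime_span_X_image (R := R) {u, v}

theorem mem_span_X_pair_iff [CommSemiring R] {u v : σ} {f : MvPolynomial σ R} :
    f ∈ Ideal.span {X u, X v} ↔ ∀ m ∈ f.support, m u ≠ 0 ∨ m v ≠ 0 := by
  rw [← Set.image_pair, mem_ideal_span_X_image]
  simp

theorem X_mem_span_X_pair_iff [CommSemiring R] [Nontrivial R] {u v w : σ} :
    (X w : MvPolynomial σ R) ∈ Ideal.span {X u, X v} ↔ w = u ∨ w = v := by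
  rw [mem_span_X_pair_iff, support_X]
  simp only [Finset.mem_singleton, forall_eq, ne_eq, Finsupp.single_apply_eq_zero]
  simp [@eq_comm _ u, @eq_comm _ v]

end MvPolynomial

section CoverIdeal

variable {K : Type} [Field K] {V : Type} {G : SimpleGraph V}

theorem isVertexCover_union_singleton_iff {C : Set V} {i : V} :
    IsVertexCover G (C ∪ {i}) ↔ ∀ ⦃u v⦄, G.Adj u v → u ∉ C → v ∉ C → i = u ∨ i = v := by
  simp only [IsVertexCover, Set.mem_union, Set.mem_singleton_iff]
  grind

theorem mem_coverIdeal {f : MvPolynomial V K} :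
    f ∈ coverIdeal K G ↔ ∀ ⦃u v⦄, G.Adj u v → f ∈ Ideal.span {X u, X v} := by
  simp [coverIdeal]

theorem mem_colon_coverIdeal {f x : MvPolynomial V K} :
    x ∈ (coverIdeal K G).colon (Ideal.span {f}) ↔
      ∀ ⦃u v⦄, G.Adj u v → f ∉ Ideal.span {X u, X v} → x ∈ Ideal.span {X u, X v} := by
  rw [Ideal.mem_colon_span_singleton, mem_coverIdeal]
  refine forall₃_congr fun u v _ => ?_
  rw [(isPrime_span_X_pair u v).mul_mem_iff_mem_or_mem, or_iff_not_imp_right]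

theorem colon_coverIdeal_prod_X_eq {C : Finset V} {i j : V} (hij : G.Adj i j)
    (hC : ¬ IsVertexCover G C) (hCi : IsVertexCover G (C ∪ {i}))
    (hCj : IsVertexCover G (C ∪ {j})) :
    (coverIdeal K G).colon (Ideal.span {∏ v ∈ C, (X v : MvPolynomial V K)}) =
      Ideal.span {X i, X j} := by
  have hmem (u v : V) : ∏ w ∈ C, (X w : MvPolynomial V K) ∈ Ideal.span {X u, X v} ↔
      u ∈ C ∨ v ∈ C := by
    simp only [(isPrime_span_X_pair u v).prod_mem_iff, X_mem_span_X_pair_iff, and_or_left,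
      exists_or, exists_eq_right]
  have hedge {u v : V} (huv : G.Adj u v) (hu : u ∉ C) (hv : v ∉ C) :
      (Ideal.span {X u, X v} : Ideal (MvPolynomial V K)) = Ideal.span {X i, X j} := by
    obtain rfl | rfl := isVertexCover_union_singleton_iff.mp hCi huv hu hv <;>
      obtain rfl | rfl := isVertexCover_union_singleton_iff.mp hCj huv hu hv
    · exact absurd rfl hij.ne
    · rfl
    · exact congrArg _ (Set.pair_comm _ _)
    · exact absurd rfl hij.ne
  obtain ⟨u, v, huv, hu, hv⟩ : ∃ u v, G.Adj u v ∧ u ∉ C ∧ v ∉ C := by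
    simpa [IsVertexCover] using hC
  ext x
  simp only [mem_colon_coverIdeal, hmem, not_or]
  refine ⟨fun h => hedge huv hu hv ▸ h huv ⟨hu, hv⟩, fun hx u' v' huv' huv'C => ?_⟩
  rwa [hedge huv' huv'C.1 huv'C.2]

theorem exists_isPrime_colon_coverIdeal [Finite V] {C : Set V} {i j : V} (hij : G.Adj i j)
    (hC : ¬ IsVertexCover G C) (hCi : IsVertexCover G (C ∪ {i}))
    (hCj : IsVertexCover G (C ∪ {j})) :
    ∃ f : MvPolynomial V K, f.IsHomogeneous C.ncard ∧
      ((coverIdeal K G).colon (Ideal.span {f})).IsPrime := by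
  set F := C.toFinite.toFinset
  have hF : (F : Set V) = C := C.toFinite.coe_toFinset
  refine ⟨∏ v ∈ F, X v, ?_, ?_⟩
  · simpa [Set.ncard_eq_toFinset_card C] using
      IsHomogeneous.prod F (fun v => (X v : MvPolynomial V K)) 1 fun v _ => isHomogeneous_X K v
  · rw [← hF] at hC hCi hCj
    rw [colon_coverIdeal_prod_X_eq hij hC hCi hCj]
    exact isPrime_span_X_pair i j

theorem exists_adj_forall_mem_of_isPrime_colon_coverIdeal [Finite V] {f : MvPolynomial V K}
    (hp : ((coverIdeal K G).colon (Ideal.span {f})).IsPrime) :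
    ∃ i j, G.Adj i j ∧ f ∉ Ideal.span {X i, X j} ∧ ∀ ⦃u v⦄, G.Adj u v →
      f ∉ Ideal.span {X u, X v} → (i = u ∨ i = v) ∧ (j = u ∨ j = v) := by
  classical
  have := Fintype.ofFinite V
  let P (q : V × V) : Ideal (MvPolynomial V K) := Ideal.span {X q.1, X q.2}
  let E := Finset.univ.filter fun q : V × V => G.Adj q.1 q.2 ∧ f ∉ P q
  have hE : E.inf P ≤ (coverIdeal K G).colon (Ideal.span {f}) := by
    intro x hx
    rw [mem_colon_coverIdeal]
    intro u v huv hfu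
    have hq : (u, v) ∈ E := Finset.mem_filter.mpr ⟨Finset.mem_univ _, huv, hfu⟩
    exact Finset.inf_le (f := P) hq hx
  obtain ⟨⟨i, j⟩, hq, hle⟩ := hp.inf_le'.mp hE
  obtain ⟨-, hij, hfij⟩ := Finset.mem_filter.mp hq
  refine ⟨i, j, hij, hfij, fun u v huv hfu => ?_⟩
  have hle' {x} (hx : x ∈ P (i, j)) : x ∈ Ideal.span {X u, X v} :=
    mem_colon_coverIdeal.mp (hle hx) huv hfu
  exact ⟨X_mem_span_X_pair_iff.mp (hle' (Ideal.subset_span (by simp))),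
    X_mem_span_X_pair_iff.mp (hle' (Ideal.subset_span (by simp)))⟩

theorem exists_ncard_le_of_isPrime_colon_coverIdeal [Finite V] {d : ℕ} {f : MvPolynomial V K}
    (hf : f.IsHomogeneous d) (hp : ((coverIdeal K G).colon (Ideal.span {f})).IsPrime) :
    ∃ C : Set V, C.ncard ≤ d ∧ ¬ IsVertexCover G C ∧
      ∃ i j, G.Adj i j ∧ IsVertexCover G (C ∪ {i}) ∧ IsVertexCover G (C ∪ {j}) := by
  obtain ⟨i, j, hij, hfij, hpair⟩ := exists_adj_forall_mem_of_isPrime_colon_coverIdeal hp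
  obtain ⟨s, hs, hsi, hsj⟩ : ∃ s ∈ f.support, s i = 0 ∧ s j = 0 := by
    simpa [mem_span_X_pair_iff] using hfij
  -- an edge missing `supp s` misses a monomial of `f`, so it contains `i` and `j`
  have hout {u v : V} (huv : G.Adj u v) (hu : u ∉ (s.support : Set V))
      (hv : v ∉ (s.support : Set V)) : (i = u ∨ i = v) ∧ (j = u ∨ j = v) :=
    hpair huv fun hfu => (mem_span_X_pair_iff.mp hfu s hs).elim
      (fun h => hu (by simpa using h)) (fun h => hv (by simpa using h))
  refine ⟨s.support, ?_, fun h => ?_, i, j, hij,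
    isVertexCover_union_singleton_iff.mpr fun u v huv hu hv => (hout huv hu hv).1,
    isVertexCover_union_singleton_iff.mpr fun u v huv hu hv => (hout huv hu hv).2⟩
  · have hdeg : s.degree = d := by
      rw [Finsupp.degree_eq_weight_one]
      exact hf (mem_support_iff.mp hs)
    simpa [Set.ncard_coe_finset, hdeg] using s.card_support_le_degree
  · simpa [hsi, hsj] using h hij

end CoverIdeal

theorem vNumber_coverIdeal_eq_sInf_general
    {K : Type} [Field K] {n : ℕ} (G : SimpleGraph (Fin n)) :
    vNumber (coverIdeal K G) =
      sInf {k | ∃ C : Set (Fin n), C.ncard = k ∧ ¬ IsVertexCover G C ∧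
        ∃ i j : Fin n, G.Adj i j ∧ IsVertexCover G (C ∪ {i}) ∧
          IsVertexCover G (C ∪ {j})} := by
  refine Nat.sInf_eq_sInf_of_subset_of_forall_exists_le ?_ ?_
  · rintro _ ⟨C, rfl, hC, i, j, hij, hCi, hCj⟩
    exact exists_isPrime_colon_coverIdeal hij hC hCi hCj
  · rintro d ⟨f, hf, hp⟩
    obtain ⟨C, hCd, hC, i, j, hij, hCi, hCj⟩ := exists_ncard_le_of_isPrime_colon_coverIdeal hf hp
    exact ⟨C.ncard, ⟨C, rfl, hC, i, j, hij, hCi, hCj⟩, hCd⟩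

/-- For a graph `G` with an edge, `v(J(G))` is the least cardinality of a set
`C` of vertices which is not a vertex cover, but such that `C ∪ {x_i}` and
`C ∪ {x_j}` are vertex covers for some edge `{x_i, x_j}`. -/
theorem vNumber_coverIdeal_eq_sInf
    {K : Type} [Field K] {n : ℕ} (hn : 1 ≤ n) (G : SimpleGraph (Fin n))
    (hE : G.edgeSet.Nonempty) :
    vNumber (coverIdeal K G) =
      sInf {k | ∃ C : Set (Fin n), C.ncard = k ∧ ¬ IsVertexCover G C ∧
        ∃ i j : Fin n, G.Adj i j ∧ IsVertexCover G (C ∪ {i}) ∧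
          IsVertexCover G (C ∪ {j})} :=
  vNumber_coverIdeal_eq_sInf_general G

end
end

section
/- Let G be a finite simple graph, x ∈ V(G), and H = G \ N_G[x] the induced subgraph on V(G) \ N_G[x]. If C′ is a minimal vertex cover of H, then C′ ∪ N_G(x) is a minimal vertex cover of G. -/
open MvPolynomial CategoryTheory

noncomputable section

/-- If `C'` is a minimal vertex cover of `H = G \ N_G[x]`, then
`C' ∪ N_G(x)` is a minimal vertex cover of `G`. -/
theorem isMinimalVertexCover_union_neighborSet
    {V : Type} (G : SimpleGraph V) (x : V)
    (C' : Set ((insert x (G.neighborSet x))ᶜ : Set V))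
    (h : IsMinimalVertexCover
      (G.induce ((insert x (G.neighborSet x))ᶜ : Set V)) C') :
    IsMinimalVertexCover G (Subtype.val '' C' ∪ G.neighborSet x) := by
  obtain ⟨hcov, hmin⟩ := h
  constructor
  · intro u v huv
    by_cases hu : u ∈ G.neighborSet x
    · exact Or.inl (Or.inr hu)
    by_cases hv : v ∈ G.neighborSet x
    · exact Or.inr (Or.inr hv)
    have hux : u ≠ x := by rintro rfl; exact hv huv
    have hvx : v ≠ x := by rintro rfl; exact hu huv.symm
    have hu' : u ∈ ((insert x (G.neighborSet x))ᶜ : Set V) := by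
      simp [Set.mem_insert_iff, hux, hu]
    have hv' : v ∈ ((insert x (G.neighborSet x))ᶜ : Set V) := by
      simp [Set.mem_insert_iff, hvx, hv]
    have hadj : (G.induce ((insert x (G.neighborSet x))ᶜ : Set V)).Adj
        ⟨u, hu'⟩ ⟨v, hv'⟩ := huv
    rcases hcov hadj with h1 | h1
    · exact Or.inl (Or.inl ⟨_, h1, rfl⟩)
    · exact Or.inr (Or.inl ⟨_, h1, rfl⟩)
  · intro D hDsub hDcov
    have hxnot : x ∉ Subtype.val '' C' ∪ G.neighborSet x := by
      rintro (⟨c, hc, hcx⟩ | hx)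
      · exact c.2 (by rw [hcx]; exact Set.mem_insert _ _)
      · exact G.irrefl hx
    have key : ∀ a : ((insert x (G.neighborSet x))ᶜ : Set V),
        (a : V) ∈ D → a ∈ C' := by
      intro a ha
      rcases hDsub ha with ⟨c, hc, hce⟩ | hn
      · rwa [Subtype.ext hce] at hc
      · exact absurd (Or.inr hn) a.2
    have hD' : Subtype.val ⁻¹' D = C' := by
      apply hmin
      · intro a ha; exact key a ha
      · intro a b hab
        rcases hDcov hab with h1 | h1
        · exact Or.inl h1
        · exact Or.inr h1
    apply Set.Subset.antisymm hDsub
    rintro w (⟨c, hc, rfl⟩ | hw)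
    · rw [← hD'] at hc; exact hc
    · rcases hDcov (hw : G.Adj x w) with h1 | h1
      · exact absurd (hDsub h1) hxnot
      · exact h1

end
end
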